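/- arXiv:2605.23487 — 2 statements merged into one kernel-verified Lean document; each statement's English description precedes it below -/
import Mathlib

section
/- If λ < β²/(1 − 2β − 2βd) with 1 − 2β − 2βd > 0, then α* − α⁺ = s(H_I)(2β − 1 + β²/λ + 2β s(H_I) + λ s(H_I)²) > 0; in particular α* ≠ α⁺ in that regime. -/
noncomputable def s (d H : ℝ) : ℝ := d + H / (1 + H)

/-- If 1 − 2β − 2βd > 0 and λ < β²/(1 − 2β − 2βd), then
α* − α⁺ = s(H_I)(2β − 1 + β²/λ + 2β s(H_I) + λ s(H_I)²) > 0; in particular α* ≠ α⁺. -/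
theorem stmt_18 (d lam β : ℝ) (hd : 0 < d) (hlam : 0 < lam) (hβ : 0 < β)
    (hβ1 : β < 1) (hden : 0 < 1 - 2 * β - 2 * β * d)
    (hlt : lam < β ^ 2 / (1 - 2 * β - 2 * β * d))
    (HI : ℝ) (hHI : 0 < HI) (hroot : lam * HI * s d HI = β) :
    lam * (s d HI) ^ 2 * (HI + s d HI * (1 + HI) ^ 2) - (1 - β) * s d HI =
      s d HI * (2 * β - 1 + β ^ 2 / lam + 2 * β * s d HI + lam * (s d HI) ^ 2) ∧
    0 < lam * (s d HI) ^ 2 * (HI + s d HI * (1 + HI) ^ 2) - (1 - β) * s d HI := by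
  set S := s d HI with hS
  have hSd : d ≤ S := by
    have h1 : 0 < 1 + HI := by linarith
    have : 0 ≤ HI / (1 + HI) := by positivity
    simp only [hS, s]; linarith
  have hSpos : 0 < S := lt_of_lt_of_le hd hSd
  have hβdiv : β ^ 2 / lam = lam * HI ^ 2 * S ^ 2 := by
    rw [← hroot]; field_simp
  have hid : lam * S ^ 2 * (HI + S * (1 + HI) ^ 2) - (1 - β) * S =
      S * (2 * β - 1 + β ^ 2 / lam + 2 * β * S + lam * S ^ 2) := by
    rw [hβdiv, ← hroot]; ring
  refine ⟨hid, ?_⟩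
  rw [hid]
  have hbd : 1 - 2 * β - 2 * β * d < β ^ 2 / lam := by
    rw [lt_div_iff₀ hlam]
    have := (lt_div_iff₀ hden).mp hlt
    linarith [mul_comm lam (1 - 2 * β - 2 * β * d)]
  have hbr : 0 < 2 * β - 1 + β ^ 2 / lam + 2 * β * S + lam * S ^ 2 := by
    have h1 : 2 * β * d ≤ 2 * β * S := by nlinarith
    nlinarith [sq_nonneg S, mul_pos hlam (mul_pos hSpos hSpos)]
  positivity
end

section
/- On the branch A = α/s(H), C = 1 − α/s(H) − λH s(H), the trace of the Jacobian of the layer problem equals (α/s(H))(λH/(1+H)² − 1) and its determinant equals λαH/(1+H)² · Q(H;α), where Q(H;α) = λ(H + s(H)(1+H)²) − α/s(H)². In particular, for λ < 4, H > 0, and Q(H;α) > 0, both eigenvalues of the Jacobian have negative real part. -/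
noncomputable def Q (d lam α H : ℝ) : ℝ :=
  lam * (H + s d H * (1 + H) ^ 2) - α / (s d H) ^ 2

/-- The Jacobian of the layer problem evaluated on the branch
A = α/s(H), C = 1 − α/s(H) − λH s(H). -/
noncomputable def Jac (d lam α H : ℝ) : Matrix (Fin 2) (Fin 2) ℝ :=
  !![lam * α * H / (s d H * (1 + H) ^ 2), lam * H * s d H;
     -(lam * α) * (1 + H / (s d H * (1 + H) ^ 2)), -(α / s d H)]

lemma quad_root_neg (T D : ℝ) (hT : T < 0) (hD : 0 < D) (μ : ℂ)
    (h : μ ^ 2 - (T : ℂ) * μ + (D : ℂ) = 0) : μ.re < 0 := by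
  set x := μ.re with hx
  set y := μ.im with hy
  have hre := congrArg Complex.re h
  have him := congrArg Complex.im h
  simp [pow_two, Complex.add_re, Complex.sub_re, Complex.mul_re,
    Complex.add_im, Complex.sub_im, Complex.mul_im, ← hx, ← hy] at hre him
  -- hre : x*x - y*y - T*x + D = 0 ; him : (x*y + y*x) - T*y = 0
  by_contra hcon
  push_neg at hcon
  by_cases hy0 : y = 0
  · rw [hy0] at hre
    nlinarith
  · have h2x : 2 * x - T = 0 := by
      have : y * (2 * x - T) = 0 := by nlinarith
      rcases mul_eq_zero.mp this with h | h
      · exact absurd h hy0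
      · exact h
    nlinarith

/-- trace J = (α/s(H))(λH/(1+H)² − 1), det J = λαH/(1+H)² · Q(H;α);
for λ < 4, H > 0, Q(H;α) > 0, both eigenvalues of J have negative real part. -/
theorem stmt_19 (d lam α : ℝ) (hd : 0 < d) (hlam : 0 < lam) (hα : 0 < α) :
    ∀ H : ℝ, 0 ≤ H →
      Matrix.trace (Jac d lam α H) = α / s d H * (lam * H / (1 + H) ^ 2 - 1) ∧
      (Jac d lam α H).det = lam * α * H / (1 + H) ^ 2 * Q d lam α H ∧
      (lam < 4 → 0 < H → 0 < Q d lam α H →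
        ∀ μ : ℂ, μ ^ 2 - (Matrix.trace (Jac d lam α H) : ℝ) * μ
            + ((Jac d lam α H).det : ℝ) = 0 → μ.re < 0) := by
  intro H hH
  have h1 : (0:ℝ) < 1 + H := by linarith
  have hs : 0 < s d H := by
    have : 0 ≤ H / (1 + H) := div_nonneg hH h1.le
    unfold s; linarith
  have htr : Matrix.trace (Jac d lam α H) = α / s d H * (lam * H / (1 + H) ^ 2 - 1) := by
    simp only [Jac, Matrix.trace_fin_two_of]
    field_simp
    ring
  have hdet : (Jac d lam α H).det = lam * α * H / (1 + H) ^ 2 * Q d lam α H := by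
    simp only [Jac, Matrix.det_fin_two_of, Q]
    field_simp
    ring
  refine ⟨htr, hdet, ?_⟩
  intro hlam4 hH0 hQ μ hμ
  have hTneg : Matrix.trace (Jac d lam α H) < 0 := by
    rw [htr]
    have hfrac : lam * H / (1 + H) ^ 2 < 1 := by
      rw [div_lt_one (by positivity)]
      nlinarith [sq_nonneg (1 - H)]
    have : α / s d H > 0 := by positivity
    nlinarith
  have hDpos : 0 < (Jac d lam α H).det := by
    rw [hdet]; positivity
  exact quad_root_neg _ _ hTneg hDpos μ hμ
end
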